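/- arXiv:0808.0640 — 4 statements merged into one kernel-verified Lean document; each statement's English description precedes it below -/
import Mathlib

section
/- The Riesz function satisfies R(x) = Σ_{n=1}^∞ μ(n)·(x/n²)·e^{−x/n²} for all real x, where R(x) = Σ_{k=0}^∞ (−1)^k x^{k+1}/(k! ζ(2k+2)) and μ is the Möbius function. -/
/-!
Expanding `1 / ζ(2k+2) = ∑ μ(n) / n ^ (2k+2)` turns `R(x)` into a double series over `(k, n)`,
absolutely convergent because `|μ(n) / n ^ (2k+2)| ≤ 1 / n²` and `∑ |x| ^ (k+1) / k!` converges.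
Summing over `k` first gives `(x / n²) e^(-x / n²)` for each `n`, by the exponential series.
-/

open scoped Real

/-- ζ(2j+2) as a real number (the zeta values at positive even integers are real). -/
noncomputable def zetaE (j : ℕ) : ℝ := (riemannZeta (2 * j + 2)).re

/-- Báez-Duarte coefficients. -/
noncomputable def bdc (k : ℕ) : ℝ :=
  ∑ j ∈ Finset.range (k + 1), (-1 : ℝ) ^ j * (k.choose j) / zetaE j

/-- The Riesz function. -/
noncomputable def rieszR (x : ℝ) : ℝ :=
  ∑' k : ℕ, (-1 : ℝ) ^ k * x ^ (k + 1) / ((k.factorial : ℝ) * zetaE k)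

open ArithmeticFunction
open scoped Nat
open scoped ArithmeticFunction.Moebius

lemma ofReal_re_riemannZeta_natCast {s : ℕ} (hs : 1 < s) :
    (((riemannZeta s).re : ℝ) : ℂ) = riemannZeta s := by
  have hreal : riemannZeta s = ((∑' n : ℕ, 1 / (n : ℝ) ^ s : ℝ) : ℂ) := by
    rw [zeta_nat_eq_tsum_of_gt_one hs, Complex.ofReal_tsum]
    push_cast
    rfl
  rw [hreal, Complex.ofReal_re]

lemma LSeries_moebius_eq_inv_riemannZeta {s : ℂ} (hs : 1 < s.re) :
    LSeries (fun n ↦ (μ n : ℂ)) s = (riemannZeta s)⁻¹ := by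
  rw [← LSeries_zeta_eq_riemannZeta hs]
  exact eq_inv_of_mul_eq_one_right (LSeries_zeta_mul_Lseries_moebius hs)

lemma tsum_moebius_div_pow {s : ℕ} (hs : 1 < s) :
    ∑' n : ℕ, (μ n : ℝ) / (n : ℝ) ^ s = ((riemannZeta s).re)⁻¹ := by
  apply Complex.ofReal_injective
  rw [Complex.ofReal_inv, ofReal_re_riemannZeta_natCast hs,
    ← LSeries_moebius_eq_inv_riemannZeta (by simpa using hs), LSeries, Complex.ofReal_tsum]
  refine tsum_congr fun n ↦ ?_
  rcases eq_or_ne n 0 with rfl | hn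
  · simp
  · rw [LSeries.term_of_ne_zero hn, Complex.cpow_natCast]
    push_cast
    rfl

lemma tsum_moebius_div_pow_eq_inv_zetaE (k : ℕ) :
    ∑' n : ℕ, (μ n : ℝ) / (n : ℝ) ^ (2 * k + 2) = (zetaE k)⁻¹ := by
  rw [tsum_moebius_div_pow (by omega), zetaE]
  push_cast
  rfl

lemma abs_moebius_div_pow_le {s : ℕ} (hs : 2 ≤ s) (n : ℕ) :
    |(μ n : ℝ) / (n : ℝ) ^ s| ≤ 1 / (n : ℝ) ^ 2 := by
  rcases eq_or_ne n 0 with rfl | hn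
  · simp
  have hn1 : (1 : ℝ) ≤ n := by exact_mod_cast Nat.one_le_iff_ne_zero.mpr hn
  have hμ : |(μ n : ℝ)| ≤ 1 := by exact_mod_cast abs_moebius_le_one
  rw [abs_div, abs_of_nonneg (by positivity : (0 : ℝ) ≤ (n : ℝ) ^ s)]
  exact div_le_div₀ zero_le_one hμ (pow_pos (zero_lt_one.trans_le hn1) 2) (pow_le_pow_right₀ hn1 hs)

lemma tsum_neg_one_pow_mul_pow_succ_div_factorial (y : ℝ) :
    ∑' k : ℕ, (-1 : ℝ) ^ k * y ^ (k + 1) / k ! = y * Real.exp (-y) := by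
  rw [Real.exp_eq_exp_ℝ, NormedSpace.exp_eq_tsum_div, ← tsum_mul_left]
  refine tsum_congr fun k ↦ ?_
  rw [neg_pow]
  ring

noncomputable def rieszMoebiusTerm (x : ℝ) (k n : ℕ) : ℝ :=
  (-1 : ℝ) ^ k * x ^ (k + 1) / k ! * ((μ n : ℝ) / (n : ℝ) ^ (2 * k + 2))

lemma summable_uncurry_rieszMoebiusTerm (x : ℝ) :
    Summable (Function.uncurry (rieszMoebiusTerm x)) := by
  have hexp : Summable fun k : ℕ ↦ |x| ^ (k + 1) / k ! := by
    refine ((Real.summable_pow_div_factorial |x|).mul_left |x|).congr fun k ↦ ?_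
    ring
  have hsq : Summable fun n : ℕ ↦ 1 / (n : ℝ) ^ 2 :=
    Real.summable_one_div_nat_pow.mpr one_lt_two
  refine .of_norm_bounded (hexp.mul_of_nonneg hsq (fun _ ↦ by positivity) fun _ ↦ by positivity) ?_
  rintro ⟨k, n⟩
  dsimp only [Function.uncurry_apply_pair]
  rw [rieszMoebiusTerm, Real.norm_eq_abs, abs_mul, abs_div, abs_mul, abs_pow, abs_neg, abs_one,
    one_pow, one_mul, abs_pow, Nat.abs_cast]
  exact mul_le_mul_of_nonneg_left (abs_moebius_div_pow_le (by omega) n) (by positivity)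

lemma tsum_rieszMoebiusTerm_right (x : ℝ) (k : ℕ) :
    ∑' n, rieszMoebiusTerm x k n = (-1 : ℝ) ^ k * x ^ (k + 1) / (k ! * zetaE k) := by
  simp only [rieszMoebiusTerm]
  rw [tsum_mul_left, tsum_moebius_div_pow_eq_inv_zetaE]
  ring

lemma tsum_rieszMoebiusTerm_left (x : ℝ) (n : ℕ) :
    ∑' k, rieszMoebiusTerm x k n = (μ n : ℝ) * (x / (n : ℝ) ^ 2) * Real.exp (-x / (n : ℝ) ^ 2) := by
  have hterm : ∀ k, rieszMoebiusTerm x k n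
      = μ n * ((-1 : ℝ) ^ k * (x / (n : ℝ) ^ 2) ^ (k + 1) / k !) := by
    intro k
    rw [rieszMoebiusTerm, div_pow, ← pow_mul]
    ring
  rw [tsum_congr hterm, tsum_mul_left, tsum_neg_one_pow_mul_pow_succ_div_factorial, neg_div,
    mul_assoc]

open ArithmeticFunction in
theorem riesz_moebius_repr (x : ℝ) :
    rieszR x = ∑' n : ℕ+, (moebius n : ℝ) * (x / (n : ℝ) ^ 2) * Real.exp (-x / (n : ℝ) ^ 2) := by
  calc rieszR x = ∑' k, ∑' n, rieszMoebiusTerm x k n := by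
        simp only [rieszR, tsum_rieszMoebiusTerm_right]
    _ = ∑' n, ∑' k, rieszMoebiusTerm x k n := (summable_uncurry_rieszMoebiusTerm x).tsum_comm.symm
    _ = ∑' n : ℕ, (moebius n : ℝ) * (x / (n : ℝ) ^ 2) * Real.exp (-x / (n : ℝ) ^ 2) := by
        simp only [tsum_rieszMoebiusTerm_left]
    _ = _ := (tsum_pnat_eq_tsum_of_eq_zero (by simp)).symm
end

section
/- The Báez-Duarte coefficients tend to zero: c_k = Σ_{j=0}^k (−1)^j C(k,j)/ζ(2j+2) → 0 as k → ∞. -/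
/-!
Expanding `1 / ζ(2j+2) = ∑ₙ μ(n) / n^(2j+2)` and summing over `j` first, the binomial theorem gives
`c_k = ∑ₙ μ(n) n⁻² (1 - n⁻²)^k`. Each term tends to `0` as `k → ∞` and is bounded by `n⁻²`
uniformly in `k`, so dominated convergence for series gives `c_k → 0`.
-/

open scoped Real

open ArithmeticFunction Filter Topology
open scoped ArithmeticFunction.Moebius

theorem tendsto_tsum_mul_pow_atTop_nhds_zero {ι 𝕜 : Type*} [NormedField 𝕜] [CompleteSpace 𝕜]
    {a r : ι → 𝕜} (ha : Summable (‖a ·‖)) (hr : ∀ i, a i ≠ 0 → ‖r i‖ < 1) :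
    Tendsto (fun k : ℕ => ∑' i, a i * r i ^ k) atTop (𝓝 0) := by
  have hlim (i : ι) : Tendsto (fun k : ℕ => a i * r i ^ k) atTop (𝓝 0) := by
    rcases eq_or_ne (a i) 0 with h | h
    · simp [h]
    · simpa using (tendsto_pow_atTop_nhds_zero_of_norm_lt_one (hr i h)).const_mul (a i)
  have hbound (k : ℕ) (i : ι) : ‖a i * r i ^ k‖ ≤ ‖a i‖ := by
    rcases eq_or_ne (a i) 0 with h | h
    · simp [h]
    · rw [norm_mul, norm_pow]
      exact mul_le_of_le_one_right (norm_nonneg _) (pow_le_one₀ (norm_nonneg _) (hr i h).le)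
  simpa using tendsto_tsum_of_dominated_convergence ha hlim (.of_forall hbound)

theorem sum_range_neg_one_pow_mul_choose_mul_pow_succ {R : Type*} [CommRing R] (t : R) (k : ℕ) :
    ∑ j ∈ Finset.range (k + 1), (-1) ^ j * (k.choose j : R) * t ^ (j + 1) = t * (1 - t) ^ k := by
  rw [sub_eq_neg_add, add_pow, Finset.mul_sum]
  refine Finset.sum_congr rfl fun j _ => ?_
  rw [neg_pow, pow_succ]
  ring

theorem hasSum_moebius_div_pow {m : ℕ} (hm : 1 < m) :
    HasSum (fun n : ℕ => (μ n : ℝ) / (n : ℝ) ^ m) (riemannZeta m).re⁻¹ := by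
  have hm' : 1 < (m : ℂ).re := by simpa using hm
  have hzeta_real : riemannZeta m = ((riemannZeta m).re : ℂ) :=
    Complex.ext rfl (by simpa using riemannZeta_im_eq_zero_of_one_lt (x := m) (by simpa using hm))
  have hinv : LSeries (fun n => (μ n : ℂ)) m = (riemannZeta m)⁻¹ :=
    eq_inv_of_mul_eq_one_right <|
      LSeries_zeta_eq_riemannZeta hm' ▸ LSeries_zeta_mul_Lseries_moebius hm'
  have hsum := (LSeriesSummable_moebius_iff.mpr hm').LSeriesHasSum
  rw [LSeriesHasSum, hinv, hzeta_real, ← Complex.ofReal_inv] at hsum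
  refine Complex.hasSum_ofReal.mp (hsum.congr_fun fun n => ?_)
  rcases eq_or_ne n 0 with rfl | hn
  · simp
  · rw [LSeries.term_of_ne_zero hn, Complex.cpow_natCast]
    push_cast
    rfl

theorem hasSum_moebius_mul_inv_sq_pow (j : ℕ) :
    HasSum (fun n : ℕ => (μ n : ℝ) * ((n : ℝ) ^ 2)⁻¹ ^ (j + 1)) (zetaE j)⁻¹ := by
  have h := hasSum_moebius_div_pow (m := 2 * j + 2) (by omega)
  push_cast at h
  rw [zetaE]
  convert h using 2 with n
  rw [div_eq_mul_inv, inv_pow, ← pow_mul]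
  ring_nf

theorem bdc_eq_tsum (k : ℕ) :
    bdc k = ∑' n : ℕ, (μ n : ℝ) * ((n : ℝ) ^ 2)⁻¹ * (1 - ((n : ℝ) ^ 2)⁻¹) ^ k := by
  have hterm (j : ℕ) : (-1 : ℝ) ^ j * (k.choose j) / zetaE j =
      ∑' n : ℕ, (-1 : ℝ) ^ j * (k.choose j) * ((μ n : ℝ) * ((n : ℝ) ^ 2)⁻¹ ^ (j + 1)) := by
    rw [div_eq_mul_inv, ← (hasSum_moebius_mul_inv_sq_pow j).tsum_eq, tsum_mul_left]
  rw [bdc, Finset.sum_congr rfl fun j _ => hterm j, ← Summable.tsum_finsetSum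
    fun j _ => (hasSum_moebius_mul_inv_sq_pow j).summable.mul_left _]
  refine tsum_congr fun n => ?_
  rw [mul_assoc, ← sum_range_neg_one_pow_mul_choose_mul_pow_succ, Finset.mul_sum]
  exact Finset.sum_congr rfl fun j _ => by ring

theorem summable_norm_moebius_mul_inv_sq :
    Summable fun n : ℕ => ‖(μ n : ℝ) * ((n : ℝ) ^ 2)⁻¹‖ := by
  refine (Real.summable_nat_pow_inv.mpr one_lt_two).of_nonneg_of_le (fun _ => norm_nonneg _)
    fun n => ?_
  rw [norm_mul, norm_inv, norm_pow, Real.norm_natCast, Real.norm_eq_abs]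
  exact mul_le_of_le_one_left (by positivity) (by exact_mod_cast abs_moebius_le_one)

theorem abs_one_sub_inv_lt_one {x : ℝ} (hx : 1 ≤ x) : |1 - x⁻¹| < 1 := by
  rw [abs_of_nonneg (sub_nonneg.mpr (inv_le_one_of_one_le₀ hx))]
  exact sub_lt_self 1 (by positivity)

theorem bdc_tendsto_zero :
    Filter.Tendsto bdc Filter.atTop (nhds 0) := by
  rw [funext bdc_eq_tsum]
  refine tendsto_tsum_mul_pow_atTop_nhds_zero summable_norm_moebius_mul_inv_sq fun n ha => ?_
  have hn : n ≠ 0 := by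
    rintro rfl
    simp at ha
  exact abs_one_sub_inv_lt_one (one_le_pow₀ (by exact_mod_cast Nat.one_le_iff_ne_zero.mpr hn))
end

section
/- The function Φ(t) = Σ_{n=1}^∞ (2π²n⁴e^{9t} − 3πn²e^{5t})·e^{−πn²e^{4t}} converges absolutely for every real t ≥ 0, and Φ(t) > 0 for all t ≥ 0. -/
open Real

/-! For `t ≥ 0` every term is positive: factoring out `π n² e^{5t}` leaves `2π n² e^{4t} - 3 ≥ 2π - 3`.
Absolute convergence (for every real `t`) follows by comparison with `n⁴ e^{-π e^{4t} n}`. -/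

noncomputable def phiTerm (t x : ℝ) : ℝ :=
  (2 * π ^ 2 * x ^ 4 * exp (9 * t) - 3 * π * x ^ 2 * exp (5 * t)) * exp (-π * x ^ 2 * exp (4 * t))

theorem phiTerm_pos {t x : ℝ} (ht : 0 ≤ t) (hx : 1 ≤ x) : 0 < phiTerm t x := by
  have hx2 : 1 ≤ x ^ 2 := one_le_pow₀ hx
  have h4t : 1 ≤ exp (4 * t) := one_le_exp (by linarith)
  have hlead : 3 < 2 * π * x ^ 2 * exp (4 * t) := by
    have : 2 * π ≤ 2 * π * x ^ 2 * exp (4 * t) := by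
      nlinarith [pi_pos, mul_le_mul hx2 h4t zero_le_one (by positivity)]
    linarith [pi_gt_three]
  have hdiff : 0 < 2 * π ^ 2 * x ^ 4 * exp (9 * t) - 3 * π * x ^ 2 * exp (5 * t) := by
    have hfac : 2 * π ^ 2 * x ^ 4 * exp (9 * t) - 3 * π * x ^ 2 * exp (5 * t)
        = π * x ^ 2 * exp (5 * t) * (2 * π * x ^ 2 * exp (4 * t) - 3) := by
      rw [show 9 * t = 5 * t + 4 * t by ring, exp_add]; ring
    rw [hfac]
    have := pi_pos
    exact mul_pos (by positivity) (by linarith)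
  exact mul_pos hdiff (exp_pos _)

theorem abs_phiTerm_le (t : ℝ) {x : ℝ} (hx : 1 ≤ x) :
    |phiTerm t x| ≤ (2 * π ^ 2 * exp (9 * t) + 3 * π * exp (5 * t)) *
      (x ^ 4 * exp (-(π * exp (4 * t)) * x)) := by
  have hx2 : x ≤ x ^ 2 := by nlinarith
  have hx4 : x ^ 2 ≤ x ^ 4 := by nlinarith
  have hpoly : |2 * π ^ 2 * x ^ 4 * exp (9 * t) - 3 * π * x ^ 2 * exp (5 * t)|
      ≤ (2 * π ^ 2 * exp (9 * t) + 3 * π * exp (5 * t)) * x ^ 4 := by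
    have := pi_pos
    refine (abs_sub _ _).trans ?_
    rw [abs_of_nonneg (by positivity), abs_of_nonneg (by positivity)]
    nlinarith [mul_le_mul_of_nonneg_left hx4 (by positivity : 0 ≤ 3 * π * exp (5 * t))]
  have hgauss : exp (-π * x ^ 2 * exp (4 * t)) ≤ exp (-(π * exp (4 * t)) * x) := by
    rw [exp_le_exp]
    nlinarith [mul_le_mul_of_nonneg_left hx2 (by positivity : 0 ≤ π * exp (4 * t))]
  rw [phiTerm, abs_mul, abs_of_pos (exp_pos _), ← mul_assoc]
  exact mul_le_mul hpoly hgauss (exp_pos _).le (by positivity)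

theorem summable_abs_phiTerm (t : ℝ) : Summable fun n : ℕ+ => |phiTerm t n| := by
  have hmajorant : Summable fun n : ℕ => (2 * π ^ 2 * exp (9 * t) + 3 * π * exp (5 * t)) *
      ((n : ℝ) ^ 4 * exp (-(π * exp (4 * t)) * n)) :=
    (summable_pow_mul_exp_neg_nat_mul 4 (by positivity)).mul_left _
  exact (hmajorant.comp_injective PNat.coe_injective).of_nonneg_of_le (fun _ => abs_nonneg _)
    fun n => abs_phiTerm_le t (by exact_mod_cast n.pos)

theorem Phi_summable_pos (t : ℝ) (ht : 0 ≤ t) :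
    (Summable fun n : ℕ+ =>
      |(2 * π ^ 2 * (n : ℝ) ^ 4 * Real.exp (9 * t) - 3 * π * (n : ℝ) ^ 2 * Real.exp (5 * t)) *
        Real.exp (-π * (n : ℝ) ^ 2 * Real.exp (4 * t))|) ∧
    0 < ∑' n : ℕ+,
      (2 * π ^ 2 * (n : ℝ) ^ 4 * Real.exp (9 * t) - 3 * π * (n : ℝ) ^ 2 * Real.exp (5 * t)) *
        Real.exp (-π * (n : ℝ) ^ 2 * Real.exp (4 * t)) := by
  have hpos (n : ℕ+) : 0 < phiTerm t n := phiTerm_pos ht (by exact_mod_cast n.pos)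
  refine ⟨summable_abs_phiTerm t, ?_⟩
  exact (summable_abs_phiTerm t).of_abs.tsum_pos (fun n => (hpos n).le) 1 (hpos 1)
end

section
/- If a sequence (c_k) of reals satisfies c_k = O(k^{−3/4+ε}) for every ε > 0, and f(x) = Σ_{k=0}^∞ c_k x^k/k! , then e^{−x} f(x) = O(x^{−3/4+ε}) for every ε > 0 as x → ∞ along reals. -/
/-!
The weights `e^{-x} x^k / k!` sum to `1` and concentrate near `k ≈ x`. Split the series at
`N = ⌈x / 2⌉`. On the tail `|c_k| ≤ C k^δ ≤ C (x / 2)^δ`, contributing `O(x^δ)`. On the head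
`x^k ≤ 2^N (x / 2)^k`, so its total weight is at most `2^N e^{-x/2} ≤ 2 e^{-(1 - log 2) x / 2}`,
which is exponentially small. An exponent `-3/4 + ε ≥ 0` is reduced to the exponent `0`.
-/

open Real Filter Asymptotics

noncomputable def borelMean (c : ℕ → ℝ) (x : ℝ) : ℝ :=
  exp (-x) * ∑' k : ℕ, c k * x ^ k / k.factorial

lemma Real.hasSum_pow_div_factorial (x : ℝ) :
    HasSum (fun k : ℕ => x ^ k / k.factorial) (exp x) := by
  rw [Real.exp_eq_exp_ℝ]
  exact NormedSpace.expSeries_div_hasSum_exp x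

lemma pow_div_factorial_le_two_pow_mul {x : ℝ} (hx : 0 ≤ x) {k N : ℕ} (hkN : k ≤ N) :
    x ^ k / k.factorial ≤ 2 ^ N * ((x / 2) ^ k / k.factorial) := by
  have h2k : (2 : ℝ) ^ k ≤ 2 ^ N := pow_le_pow_right₀ one_le_two hkN
  calc x ^ k / k.factorial = 2 ^ k * ((x / 2) ^ k / k.factorial) := by
        rw [div_pow]; field_simp
    _ ≤ 2 ^ N * ((x / 2) ^ k / k.factorial) := by gcongr

lemma abs_borelMean_le {c : ℕ → ℝ} {M B x : ℝ} {N : ℕ} (hx : 0 ≤ x)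
    (hM : ∀ k, |c k| ≤ M) (hB : ∀ k, N ≤ k → |c k| ≤ B) :
    |borelMean c x| ≤ M * 2 ^ N * exp (-(x / 2)) + B := by
  have hM0 : 0 ≤ M := (abs_nonneg _).trans (hM 0)
  have hB0 : 0 ≤ B := (abs_nonneg _).trans (hB N le_rfl)
  have hsum : HasSum
      (fun k : ℕ => M * 2 ^ N * ((x / 2) ^ k / k.factorial) + B * (x ^ k / k.factorial))
      (M * 2 ^ N * exp (x / 2) + B * exp x) :=
    ((hasSum_pow_div_factorial _).mul_left _).add ((hasSum_pow_div_factorial x).mul_left B)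
  have hterm (k : ℕ) : ‖c k * x ^ k / k.factorial‖ ≤
      M * 2 ^ N * ((x / 2) ^ k / k.factorial) + B * (x ^ k / k.factorial) := by
    rw [Real.norm_eq_abs, mul_div_assoc, abs_mul,
      abs_of_nonneg (by positivity : (0 : ℝ) ≤ x ^ k / k.factorial)]
    rcases lt_or_ge k N with hk | hk
    · calc |c k| * (x ^ k / k.factorial) ≤ M * (2 ^ N * ((x / 2) ^ k / k.factorial)) :=
            mul_le_mul (hM k) (pow_div_factorial_le_two_pow_mul hx hk.le) (by positivity) hM0
        _ ≤ _ := by rw [← mul_assoc]; exact le_add_of_nonneg_right (by positivity)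
    · exact le_add_of_nonneg_of_le (by positivity)
        (mul_le_mul_of_nonneg_right (hB k hk) (by positivity))
  calc |borelMean c x| = exp (-x) * ‖∑' k : ℕ, c k * x ^ k / k.factorial‖ := by
        rw [borelMean, abs_mul, abs_of_pos (exp_pos _), Real.norm_eq_abs]
    _ ≤ exp (-x) * (M * 2 ^ N * exp (x / 2) + B * exp x) := by
        gcongr; exact tsum_of_norm_bounded hsum hterm
    _ = M * 2 ^ N * exp (-(x / 2)) + B := by
        have h₁ : exp (-x) * exp (x / 2) = exp (-(x / 2)) := by rw [← exp_add]; ring_nf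
        have h₂ : exp (-x) * exp x = 1 := by rw [← exp_add, neg_add_cancel, exp_zero]
        linear_combination M * 2 ^ N * h₁ + B * h₂

lemma isBigO_rpow_atTop_of_le {a b : ℝ} (hab : a ≤ b) :
    (fun x : ℝ => x ^ a) =O[atTop] fun x => x ^ b :=
  IsBigO.of_bound' <| (eventually_ge_atTop 1).mono fun x hx => by
    rw [Real.norm_of_nonneg (by positivity), Real.norm_of_nonneg (by positivity)]
    exact rpow_le_rpow_of_exponent_le hx hab

lemma two_pow_ceil_half_mul_exp_neg_half_le {x : ℝ} (hx : 0 ≤ x) :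
    (2 : ℝ) ^ ⌈x / 2⌉₊ * exp (-(x / 2)) ≤ 2 * exp (-((1 - log 2) / 2) * x) := by
  have hceil : (⌈x / 2⌉₊ : ℝ) ≤ x / 2 + 1 := (Nat.ceil_lt_add_one (by positivity)).le
  calc (2 : ℝ) ^ ⌈x / 2⌉₊ * exp (-(x / 2)) = exp (⌈x / 2⌉₊ * log 2 - x / 2) := by
        rw [sub_eq_add_neg, exp_add, exp_nat_mul, exp_log two_pos]
    _ ≤ exp ((x / 2 + 1) * log 2 - x / 2) := by gcongr
    _ = 2 * exp (-((1 - log 2) / 2) * x) := by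
        rw [← exp_log two_pos, ← exp_add, log_exp]; ring_nf

theorem isBigO_borelMean_of_isBigO_rpow {c : ℕ → ℝ} {δ : ℝ} (hδ : δ ≤ 0)
    (hc : c =O[atTop] fun k : ℕ => (k : ℝ) ^ δ) :
    borelMean c =O[atTop] fun x => x ^ δ := by
  obtain ⟨M, hM⟩ : ∃ M, ∀ k, ‖c k‖ ≤ M := by
    refine isBigO_one_nat_atTop_iff.1 (hc.trans ?_)
    simpa only [Function.comp_def, rpow_zero] using
      (isBigO_rpow_atTop_of_le hδ).comp_tendsto tendsto_natCast_atTop_atTop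
  obtain ⟨C, hC0, hC⟩ := hc.exists_pos
  obtain ⟨K, hK⟩ := eventually_atTop.1 hC.bound
  set a := (1 - log 2) / 2
  have ha : 0 < a := by have := log_two_lt_d9; norm_num [a]; linarith
  have hbound : ∀ᶠ x in atTop,
      ‖borelMean c x‖ ≤ M * (2 * exp (-a * x)) + C * 2 ^ (-δ) * x ^ δ := by
    filter_upwards [eventually_ge_atTop (2 * (K : ℝ)), eventually_gt_atTop 0] with x hKx hx
    refine (abs_borelMean_le (N := ⌈x / 2⌉₊) (B := C * 2 ^ (-δ) * x ^ δ) hx.le hM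
      fun k hk => ?_).trans ?_
    · have hxk : x / 2 ≤ k := (Nat.le_ceil _).trans (by exact_mod_cast hk)
      have hKk : K ≤ k := by exact_mod_cast (by linarith : (K : ℝ) ≤ k)
      calc |c k| ≤ C * ‖(k : ℝ) ^ δ‖ := hK k hKk
        _ ≤ C * (x / 2) ^ δ := by
          rw [Real.norm_of_nonneg (by positivity)]
          exact mul_le_mul_of_nonneg_left (rpow_le_rpow_of_nonpos (by positivity) hxk hδ) hC0.le
        _ = C * 2 ^ (-δ) * x ^ δ := by
          rw [div_rpow hx.le zero_le_two, rpow_neg zero_le_two]; ring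
    · rw [mul_assoc M]
      exact add_le_add_left (mul_le_mul_of_nonneg_left
        (two_pow_ceil_half_mul_exp_neg_half_le hx.le) ((norm_nonneg _).trans (hM 0))) _
  refine (IsBigO.of_norm_eventuallyLE hbound).trans ?_
  exact (((isLittleO_exp_neg_mul_rpow_atTop ha δ).isBigO.const_mul_left 2).const_mul_left M).add
    ((isBigO_refl _ _).const_mul_left _)

theorem borel_summation_direction (c : ℕ → ℝ)
    (hc : ∀ ε : ℝ, 0 < ε → ∃ C : ℝ, ∀ k : ℕ, 1 ≤ k → |c k| ≤ C * (k : ℝ) ^ (-3/4 + ε)) :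
    ∀ ε : ℝ, 0 < ε → ∃ C X : ℝ, ∀ x : ℝ, X ≤ x →
      |Real.exp (-x) * ∑' k : ℕ, c k * x ^ k / (k.factorial : ℝ)| ≤ C * x ^ (-3/4 + ε) := by
  intro ε hε
  obtain ⟨C, hC⟩ := hc (min ε (3/4)) (lt_min hε (by norm_num))
  have hc' : c =O[atTop] fun k : ℕ => (k : ℝ) ^ (-3/4 + min ε (3/4)) :=
    IsBigO.of_bound C <| eventually_atTop.2 ⟨1, fun k hk => by
      rw [Real.norm_eq_abs, Real.norm_of_nonneg (by positivity)]; exact hC k hk⟩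
  have hO : borelMean c =O[atTop] fun x => x ^ (-3/4 + ε) :=
    (isBigO_borelMean_of_isBigO_rpow (by linarith [min_le_right ε (3/4)]) hc').trans
      (isBigO_rpow_atTop_of_le (by linarith [min_le_left ε (3/4)]))
  obtain ⟨C', hC'⟩ := hO.bound
  obtain ⟨X, hX⟩ := eventually_atTop.1 (hC'.and (eventually_ge_atTop 0))
  refine ⟨C', X, fun x hx => ?_⟩
  obtain ⟨hbound, hx0⟩ := hX x hx
  rwa [Real.norm_eq_abs, Real.norm_of_nonneg (by positivity)] at hbound
end
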